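/- Let Ω ⊂ H^n be open convex with B_H(0,cR) ⊂ Ω for constants c, R > 0, and u: closure(Ω) → R an H-convex function with u ≤ 0 on Ω. Let ξ₁, ξ₂ ∈ B_H(0,cR) with ξ₂ ∈ H_{ξ₁}, N(ξ₁) ≤ c₁R, N(ξ₂) ≤ c₂R, d_H(ξ₁,ξ₂) ≤ c₃R, where c₁,c₂ ≥ 0, c₃ > 0, c₁+c₃ < c, c₂+c₃ < c. Then ((c−c₁−c₃)/(c−c₁))·u(ξ₁) ≥ u(ξ₂) ≥ ((c−c₂)/(c−c₂−c₃))·u(ξ₁). -/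

import Mathlib

open scoped BigOperators

/-- A point of the Heisenberg group `ℍⁿ` in real coordinates `(x, y, t)`. -/
abbrev Hpt (n : ℕ) := (Fin n → ℝ) × (Fin n → ℝ) × ℝ

/-- Euclidean dot product on `ℝⁿ`. -/
def dotR {n : ℕ} (a b : Fin n → ℝ) : ℝ := ∑ i, a i * b i

/-- Heisenberg group law. -/
def hmul {n : ℕ} (ξ η : Hpt n) : Hpt n :=
  (ξ.1 + η.1, ξ.2.1 + η.2.1,
    ξ.2.2 + η.2.2 + 2 * (dotR ξ.2.1 η.1 - dotR ξ.1 η.2.1))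

/-- Heisenberg group inverse. -/
def hinv {n : ℕ} (ξ : Hpt n) : Hpt n := (-ξ.1, -ξ.2.1, -ξ.2.2)

/-- Heisenberg dilation `δ_l`. -/
def hdil {n : ℕ} (l : ℝ) (ξ : Hpt n) : Hpt n := (l • ξ.1, l • ξ.2.1, l ^ 2 * ξ.2.2)

/-- The Korányi gauge `N(x,y,t) = ((|x|²+|y|²)² + t²)^(1/4)`. -/
noncomputable def KN {n : ℕ} (ξ : Hpt n) : ℝ :=
  ((dotR ξ.1 ξ.1 + dotR ξ.2.1 ξ.2.1) ^ 2 + ξ.2.2 ^ 2) ^ ((1 : ℝ) / 4)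

/-- The Korányi–Cygan metric. -/
noncomputable def dH {n : ℕ} (ξ η : Hpt n) : ℝ := KN (hmul (hinv η) ξ)

/-- The horizontal plane at `ξ₀`. -/
def Hplane {n : ℕ} (ξ₀ : Hpt n) : Set (Hpt n) :=
  {ξ | ξ.2.2 = ξ₀.2.2 + 2 * (dotR ξ.1 ξ₀.2.1 - dotR ξ₀.1 ξ.2.1)}

/-- Projection onto the first `2n` coordinates. -/
def Pr1 {n : ℕ} (ξ : Hpt n) : (Fin n → ℝ) × (Fin n → ℝ) := (ξ.1, ξ.2.1)

/-- Dot product on `ℝ^{2n}`. -/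
def dot2n {n : ℕ} (p q : (Fin n → ℝ) × (Fin n → ℝ)) : ℝ := dotR p.1 q.1 + dotR p.2 q.2

/-- The horizontal subdifferential of `u` (with domain `Ω`) at `ξ₀`. -/
def subdiffH {n : ℕ} (Ω : Set (Hpt n)) (u : Hpt n → ℝ) (ξ₀ : Hpt n) :
    Set ((Fin n → ℝ) × (Fin n → ℝ)) :=
  {p | ∀ ξ ∈ Ω ∩ Hplane ξ₀, u ξ ≥ u ξ₀ + dot2n p (Pr1 ξ - Pr1 ξ₀)}

/-- `H`-convexity of a set. -/
def HConvexSet {n : ℕ} (S : Set (Hpt n)) : Prop :=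
  ∀ ξ₁ ∈ S, ∀ ξ₂ ∈ S, ξ₁ ∈ Hplane ξ₂ → ∀ l ∈ Set.Icc (0 : ℝ) 1,
    hmul ξ₁ (hdil l (hmul (hinv ξ₁) ξ₂)) ∈ S

/-- `H`-convexity of a function on a set. -/
def HConvexOn {n : ℕ} (S : Set (Hpt n)) (u : Hpt n → ℝ) : Prop :=
  ∀ ξ₁ ∈ S, ∀ ξ₂ ∈ S, ξ₁ ∈ Hplane ξ₂ → ∀ l ∈ Set.Icc (0 : ℝ) 1,
    u (hmul ξ₁ (hdil l (hmul (hinv ξ₁) ξ₂))) ≤ (1 - l) * u ξ₁ + l * u ξ₂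

/-- Horizontal boundedness: the horizontal slices have uniformly bounded diameter. -/
def horizBounded {n : ℕ} (Ω : Set (Hpt n)) : Prop :=
  ∃ M : ℝ, ∀ ξ ∈ Ω, ∀ ζ ∈ Ω ∩ Hplane ξ, ∀ η ∈ Ω ∩ Hplane ξ, dH ζ η ≤ M

/-!
Identifying the horizontal layer with `ℂⁿ`, the Korányi gauge satisfies `N(ξ)² = ‖(|z|², t)‖`,
and `(|z|², t) ∈ ℂ` is additive under the group law up to twice a Hermitian product of the
horizontal parts, so Cauchy–Schwarz gives `N(ξ ∘ η) ≤ N(ξ) + N(η)`.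

Extend the horizontal segment from `ξ₁` through `ξ₂` to `η = ξ₁ ∘ δ_{1/λ}(ξ₁⁻¹ ∘ ξ₂)`. Then
`N(η) ≤ N(ξ₁) + d_H(ξ₂, ξ₁) / λ < cR` once `λ > c₃ / (c - c₁)`, so `u(η) ≤ 0`, and `H`-convexity
on the segment from `ξ₁` to `η`, which passes through `ξ₂` at parameter `λ`, gives
`u(ξ₂) ≤ (1 - λ) u(ξ₁)`. Letting `λ ↓ c₃ / (c - c₁)` gives the upper bound; the lower bound is
the upper bound with `ξ₁` and `ξ₂` exchanged.
-/

section

variable {n : ℕ}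

open scoped InnerProductSpace

theorem dotR_eq_dotProduct (a b : Fin n → ℝ) : dotR a b = a ⬝ᵥ b := rfl

theorem hinv_hmul_cancel_left (a b : Hpt n) : hmul (hinv a) (hmul a b) = b := by
  refine Prod.ext (by simp [hmul, hinv]) (Prod.ext (by simp [hmul, hinv]) ?_)
  simp only [hmul, hinv, dotR_eq_dotProduct, neg_dotProduct, dotProduct_add,
    dotProduct_comm a.2.1 a.1]
  ring

theorem hmul_hinv_cancel_left (a b : Hpt n) : hmul a (hmul (hinv a) b) = b := by
  refine Prod.ext (by simp [hmul, hinv]) (Prod.ext (by simp [hmul, hinv]) ?_)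
  simp only [hmul, hinv, dotR_eq_dotProduct, neg_dotProduct, dotProduct_neg, dotProduct_add,
    dotProduct_comm a.2.1 a.1]
  ring

theorem hinv_hinv (a : Hpt n) : hinv (hinv a) = a := by
  simp [hinv]

theorem hinv_hmul (a b : Hpt n) : hinv (hmul a b) = hmul (hinv b) (hinv a) := by
  refine Prod.ext (by simp [hmul, hinv, add_comm]) (Prod.ext (by simp [hmul, hinv, add_comm]) ?_)
  simp only [hmul, hinv, dotR_eq_dotProduct, neg_dotProduct, dotProduct_neg,
    dotProduct_comm b.2.1 a.1, dotProduct_comm b.1 a.2.1]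
  ring

theorem hdil_hdil (s t : ℝ) (ξ : Hpt n) : hdil s (hdil t ξ) = hdil (s * t) ξ := by
  simp only [hdil, smul_smul, mul_pow, mul_assoc]

theorem hdil_one (ξ : Hpt n) : hdil 1 ξ = ξ := by
  simp [hdil]

theorem mem_Hplane_iff {ξ η : Hpt n} : η ∈ Hplane ξ ↔ (hmul (hinv ξ) η).2.2 = 0 := by
  simp only [Hplane, Set.mem_ofPred_eq, hmul, hinv, dotR_eq_dotProduct, neg_dotProduct,
    dotProduct_comm η.1 ξ.2.1]
  constructor <;> intro h <;> linarith

theorem hmul_mem_Hplane {ξ θ : Hpt n} (hθ : θ.2.2 = 0) : hmul ξ θ ∈ Hplane ξ := by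
  rwa [mem_Hplane_iff, hinv_hmul_cancel_left]

theorem mem_Hplane_comm {ξ η : Hpt n} : η ∈ Hplane ξ ↔ ξ ∈ Hplane η := by
  rw [mem_Hplane_iff, mem_Hplane_iff, ← hinv_hinv (hmul (hinv η) ξ), hinv_hmul, hinv_hinv]
  simp only [hinv, neg_eq_zero]

/-- The horizontal coordinates `z = x + iy ∈ ℂⁿ`. -/
def hproj (ξ : Hpt n) : EuclideanSpace ℂ (Fin n) := WithLp.toLp 2 fun i => ⟨ξ.1 i, ξ.2.1 i⟩

theorem norm_hproj_sq (ξ : Hpt n) : ‖hproj ξ‖ ^ 2 = dotR ξ.1 ξ.1 + dotR ξ.2.1 ξ.2.1 := by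
  simp only [EuclideanSpace.norm_sq_eq, hproj, Complex.sq_norm, Complex.normSq_mk, dotR,
    ← Finset.sum_add_distrib]

theorem inner_hproj (ξ η : Hpt n) : ⟪hproj η, hproj ξ⟫_ℂ =
    ⟨dotR ξ.1 η.1 + dotR ξ.2.1 η.2.1, dotR ξ.2.1 η.1 - dotR ξ.1 η.2.1⟩ := by
  apply Complex.ext
  · simp [PiLp.inner_apply, hproj, Complex.re_sum, dotR, Finset.sum_add_distrib]
  · simp [PiLp.inner_apply, hproj, Complex.im_sum, dotR, ← Finset.sum_sub_distrib]
    exact Finset.sum_congr rfl fun i _ => by ring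

def gaugeC (ξ : Hpt n) : ℂ := ⟨dotR ξ.1 ξ.1 + dotR ξ.2.1 ξ.2.1, ξ.2.2⟩

theorem KN_nonneg (ξ : Hpt n) : 0 ≤ KN ξ := by
  unfold KN; positivity

theorem KN_sq (ξ : Hpt n) : KN ξ ^ 2 = ‖gaugeC ξ‖ := by
  rw [KN, ← Real.rpow_natCast, ← Real.rpow_mul (by positivity), Complex.norm_def,
    Complex.normSq_mk, Real.sqrt_eq_rpow, gaugeC]
  norm_num [sq]

theorem gaugeC_hmul (ξ η : Hpt n) :
    gaugeC (hmul ξ η) = gaugeC ξ + gaugeC η + 2 * ⟪hproj η, hproj ξ⟫_ℂ := by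
  apply Complex.ext <;>
  simp only [gaugeC, hmul, inner_hproj, dotR_eq_dotProduct, add_dotProduct, dotProduct_add,
    dotProduct_comm η.1 ξ.1, dotProduct_comm η.2.1 ξ.2.1, Complex.add_re, Complex.add_im,
    Complex.mul_re, Complex.mul_im, Complex.re_ofNat, Complex.im_ofNat] <;>
  ring

theorem norm_hproj_le_KN (ξ : Hpt n) : ‖hproj ξ‖ ≤ KN ξ := by
  refine pow_le_pow_iff_left₀ (norm_nonneg _) (KN_nonneg ξ) two_ne_zero |>.mp ?_
  rw [norm_hproj_sq, KN_sq]
  exact Complex.re_le_norm (gaugeC ξ)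

theorem KN_hmul_le (ξ η : Hpt n) : KN (hmul ξ η) ≤ KN ξ + KN η := by
  refine pow_le_pow_iff_left₀ (KN_nonneg _) (by linarith [KN_nonneg ξ, KN_nonneg η])
    two_ne_zero |>.mp ?_
  have hCS : ‖⟪hproj η, hproj ξ⟫_ℂ‖ ≤ KN η * KN ξ :=
    (norm_inner_le_norm _ _).trans <|
      mul_le_mul (norm_hproj_le_KN η) (norm_hproj_le_KN ξ) (norm_nonneg _) (KN_nonneg η)
  calc KN (hmul ξ η) ^ 2
      ≤ ‖gaugeC ξ‖ + ‖gaugeC η‖ + 2 * ‖⟪hproj η, hproj ξ⟫_ℂ‖ := by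
        rw [KN_sq, gaugeC_hmul]
        refine (norm_add_le _ _).trans (add_le_add (norm_add_le _ _) ?_)
        rw [norm_mul, Complex.norm_two]
    _ ≤ (KN ξ + KN η) ^ 2 := by
        rw [← KN_sq, ← KN_sq]
        nlinarith

theorem KN_hdil {l : ℝ} (hl : 0 ≤ l) (ξ : Hpt n) : KN (hdil l ξ) = l * KN ξ := by
  have hsq : ((dotR (l • ξ.1) (l • ξ.1) + dotR (l • ξ.2.1) (l • ξ.2.1)) ^ 2 +
      (l ^ 2 * ξ.2.2) ^ 2) = l ^ 4 * ((dotR ξ.1 ξ.1 + dotR ξ.2.1 ξ.2.1) ^ 2 + ξ.2.2 ^ 2) := by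
    simp only [dotR_eq_dotProduct, smul_dotProduct, dotProduct_smul, smul_eq_mul]
    ring
  rw [KN, KN, hdil, hsq, Real.mul_rpow (by positivity) (by positivity), ← Real.rpow_natCast l 4,
    ← Real.rpow_mul hl]
  norm_num

theorem KN_hinv (ξ : Hpt n) : KN (hinv ξ) = KN ξ := by
  simp only [KN, hinv, dotR_eq_dotProduct, neg_dotProduct, dotProduct_neg, neg_neg, neg_sq]

theorem dH_comm (ξ η : Hpt n) : dH ξ η = dH η ξ := by
  rw [dH, dH, ← KN_hinv, hinv_hmul, hinv_hinv]

theorem HConvexOn.le_of_hdil_inv {S : Set (Hpt n)} {u : Hpt n → ℝ} (hu : HConvexOn S u)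
    {ξ₁ ξ₂ : Hpt n} (hH : ξ₂ ∈ Hplane ξ₁) (h₁ : ξ₁ ∈ S) {l : ℝ} (hl0 : 0 < l) (hl1 : l ≤ 1)
    (hη : hmul ξ₁ (hdil l⁻¹ (hmul (hinv ξ₁) ξ₂)) ∈ S) :
    u ξ₂ ≤ (1 - l) * u ξ₁ + l * u (hmul ξ₁ (hdil l⁻¹ (hmul (hinv ξ₁) ξ₂))) := by
  have hplane : ξ₁ ∈ Hplane (hmul ξ₁ (hdil l⁻¹ (hmul (hinv ξ₁) ξ₂))) := by
    refine mem_Hplane_comm.mp (hmul_mem_Hplane ?_)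
    simp only [hdil, mem_Hplane_iff.mp hH, mul_zero]
  have hpt : hmul ξ₁ (hdil l (hmul (hinv ξ₁) (hmul ξ₁ (hdil l⁻¹ (hmul (hinv ξ₁) ξ₂))))) = ξ₂ := by
    rw [hinv_hmul_cancel_left, hdil_hdil, mul_inv_cancel₀ hl0.ne', hdil_one,
      hmul_hinv_cancel_left]
  simpa only [hpt] using hu ξ₁ h₁ _ hη hplane l ⟨hl0.le, hl1⟩

theorem KN_hmul_hdil_inv_le (ξ₁ ξ₂ : Hpt n) {l : ℝ} (hl : 0 < l) :
    KN (hmul ξ₁ (hdil l⁻¹ (hmul (hinv ξ₁) ξ₂))) ≤ KN ξ₁ + l⁻¹ * dH ξ₂ ξ₁ := by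
  simpa only [dH, KN_hdil (inv_nonneg.mpr hl.le)] using KN_hmul_le ξ₁ (hdil l⁻¹ _)

theorem HConvexOn.le_one_sub_mul {Ω : Set (Hpt n)} {r : ℝ} (hball : {ξ | KN ξ < r} ⊆ Ω)
    {u : Hpt n → ℝ} (hu : HConvexOn (closure Ω) u) (hneg : ∀ ξ ∈ Ω, u ξ ≤ 0)
    {ξ₁ ξ₂ : Hpt n} (hH : ξ₂ ∈ Hplane ξ₁) {l : ℝ} (hl0 : 0 < l) (hl1 : l ≤ 1)
    (hr : KN ξ₁ + l⁻¹ * dH ξ₂ ξ₁ < r) : u ξ₂ ≤ (1 - l) * u ξ₁ := by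
  have hη : hmul ξ₁ (hdil l⁻¹ (hmul (hinv ξ₁) ξ₂)) ∈ Ω :=
    hball ((KN_hmul_hdil_inv_le ξ₁ ξ₂ hl0).trans_lt hr)
  have h₁ : ξ₁ ∈ Ω := hball <| lt_of_le_of_lt
    (le_add_of_nonneg_right (mul_nonneg (inv_nonneg.mpr hl0.le) (KN_nonneg _))) hr
  have := hu.le_of_hdil_inv hH (subset_closure h₁) hl0 hl1 (subset_closure hη)
  nlinarith [hneg _ hη]

theorem HConvexOn.le_mul_of_dH_le {Ω : Set (Hpt n)} {c R c₁ c₃ : ℝ} (hR : 0 < R)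
    (hball : {ξ | KN ξ < c * R} ⊆ Ω) {u : Hpt n → ℝ} (hu : HConvexOn (closure Ω) u)
    (hneg : ∀ ξ ∈ Ω, u ξ ≤ 0) {ξ₁ ξ₂ : Hpt n} (hH : ξ₂ ∈ Hplane ξ₁) (hc₃ : 0 < c₃)
    (hN : KN ξ₁ ≤ c₁ * R) (hd : dH ξ₂ ξ₁ ≤ c₃ * R) (h13 : c₁ + c₃ < c) :
    u ξ₂ ≤ (c - c₁ - c₃) / (c - c₁) * u ξ₁ := by
  have hcc₁ : 0 < c - c₁ := by linarith
  set l := c₃ / (c - c₁) with hl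
  have hl0 : 0 < l := div_pos hc₃ hcc₁
  have hl1 : l < 1 := (div_lt_one hcc₁).mpr (by linarith)
  have hcoef : (c - c₁ - c₃) / (c - c₁) = 1 - l := by
    rw [hl]; field_simp
  rw [hcoef]
  -- For `l` itself the extended point may lie on the sphere `KN = c * R`, outside `Ω`, where
  -- nothing bounds `u`; so `l` is reached as a limit of larger parameters.
  have hclos : l ∈ closure (Set.Ioo l 1) := by
    rw [closure_Ioo hl1.ne]; exact Set.left_mem_Icc.mpr hl1.le
  refine ContinuousWithinAt.closure_le (f := fun _ => u ξ₂) (g := fun l' => (1 - l') * u ξ₁)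
    hclos continuousWithinAt_const (by fun_prop) ?_
  rintro l' ⟨hll', hl'1⟩
  have hl'0 : 0 < l' := hl0.trans hll'
  have hl'c : l'⁻¹ * c₃ < c - c₁ := by
    rw [inv_mul_lt_iff₀ hl'0]; exact (div_lt_iff₀ hcc₁).mp hll'
  refine hu.le_one_sub_mul hball hneg hH hl'0 hl'1.le ?_
  calc KN ξ₁ + l'⁻¹ * dH ξ₂ ξ₁ ≤ c₁ * R + l'⁻¹ * c₃ * R := by
        rw [mul_assoc]; gcongr
    _ < c₁ * R + (c - c₁) * R := by gcongr
    _ = c * R := by ring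

end

theorem two_sided_harnack_lemma_general {n : ℕ} (Ω : Set (Hpt n)) (c R : ℝ) (hR : 0 < R)
    (hball : {ξ : Hpt n | KN ξ < c * R} ⊆ Ω)
    (u : Hpt n → ℝ) (hu : HConvexOn (closure Ω) u) (hneg : ∀ ξ ∈ Ω, u ξ ≤ 0)
    (ξ₁ ξ₂ : Hpt n)
    (hH : ξ₂ ∈ Hplane ξ₁)
    (c₁ c₂ c₃ : ℝ) (hc₃ : 0 < c₃)
    (hN1 : KN ξ₁ ≤ c₁ * R) (hN2 : KN ξ₂ ≤ c₂ * R) (hd12 : dH ξ₂ ξ₁ ≤ c₃ * R)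
    (h13 : c₁ + c₃ < c) (h23 : c₂ + c₃ < c) :
    ((c - c₁ - c₃) / (c - c₁)) * u ξ₁ ≥ u ξ₂ ∧
      u ξ₂ ≥ ((c - c₂) / (c - c₂ - c₃)) * u ξ₁ := by
  refine ⟨hu.le_mul_of_dH_le hR hball hneg hH hc₃ hN1 hd12 h13, ?_⟩
  have hswap := hu.le_mul_of_dH_le hR hball hneg (mem_Hplane_comm.mp hH) hc₃ hN2
    ((dH_comm ξ₁ ξ₂).trans_le hd12) h23
  rw [div_mul_eq_mul_div, le_div_iff₀ (by linarith)] at hswap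
  rw [ge_iff_le, div_mul_eq_mul_div, div_le_iff₀ (by linarith)]
  linarith

/-- Two-sided Harnack-type lemma for `H`-convex functions (Lemma 6.3). -/
theorem two_sided_harnack_lemma {n : ℕ} (Ω : Set (Hpt n)) (hopen : IsOpen Ω)
    (hconv : Convex ℝ Ω) (c R : ℝ) (hc : 0 < c) (hR : 0 < R)
    (hball : {ξ : Hpt n | KN ξ < c * R} ⊆ Ω)
    (u : Hpt n → ℝ) (hu : HConvexOn (closure Ω) u) (hneg : ∀ ξ ∈ Ω, u ξ ≤ 0)
    (ξ₁ ξ₂ : Hpt n) (h1 : KN ξ₁ < c * R) (h2 : KN ξ₂ < c * R)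
    (hH : ξ₂ ∈ Hplane ξ₁)
    (c₁ c₂ c₃ : ℝ) (hc₁ : 0 ≤ c₁) (hc₂ : 0 ≤ c₂) (hc₃ : 0 < c₃)
    (hN1 : KN ξ₁ ≤ c₁ * R) (hN2 : KN ξ₂ ≤ c₂ * R) (hd12 : dH ξ₂ ξ₁ ≤ c₃ * R)
    (h13 : c₁ + c₃ < c) (h23 : c₂ + c₃ < c) :
    ((c - c₁ - c₃) / (c - c₁)) * u ξ₁ ≥ u ξ₂ ∧
      u ξ₂ ≥ ((c - c₂) / (c - c₂ - c₃)) * u ξ₁ :=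
  two_sided_harnack_lemma_general Ω c R hR hball u hu hneg ξ₁ ξ₂ hH c₁ c₂ c₃ hc₃ hN1 hN2 hd12 h13
    h23
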